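/- In ℝⁿ with n ≥ 2 (Euclidean metric), the Gromov boundary is a singleton set, while the ideal boundary (the set of equivalence classes of geodesic rays) has cardinality at least that of the continuum. Hence the natural map ν from the ideal boundary to the Gromov boundary is not injective. -/

import Mathlib

open Filter

/-- The Gromov product of `x` and `y` with basepoint `o` in a metric space. -/
noncomputable def gromovProd {α : Type*} [MetricSpace α] (o x y : α) : ℝ :=
  (dist x o + dist y o - dist x y) / 2

/-- `x` is a Gromov sequence with basepoint `o`. -/
def IsGromovSeq {α : Type*} [MetricSpace α] (o : α) (x : ℕ → α) : Prop :=
  Tendsto (fun p : ℕ × ℕ => gromovProd o (x p.1) (x p.2)) atTop atTop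

/-- The relation `E` on Gromov sequences. -/
def GromovRel {α : Type*} [MetricSpace α] (o : α) (x y : ℕ → α) : Prop :=
  Tendsto (fun p : ℕ × ℕ => gromovProd o (x p.1) (y p.2)) atTop atTop

/-- `γ : [0,∞) → α` is a unit-speed geodesic ray. -/
def IsGeodesicRay {α : Type*} [MetricSpace α] (γ : ℝ → α) : Prop :=
  ∀ s t : ℝ, 0 ≤ s → 0 ≤ t → dist (γ s) (γ t) = |s - t|

/-- Two rays are equivalent if they stay at uniformly bounded distance. -/
def RayEquiv {α : Type*} [MetricSpace α] (γ₁ γ₂ : ℝ → α) : Prop :=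
  ∃ C : ℝ, ∀ t : ℝ, 0 ≤ t → dist (γ₁ t) (γ₂ t) ≤ C

/-!
In `ℝⁿ` the Gromov product `(a|b)₀` is at least a fixed multiple of `min ‖a‖ ‖b‖` as long as
the directions of `a` and `b` are not close to opposite. Hence two sequences tending to infinity
whose directions converge to non-antipodal unit vectors are `E`-related. By compactness of the
sphere every Gromov sequence has a subsequence with a limiting direction `u`, and the sequence is
`E`-related to that subsequence. When `n ≥ 2` there is a unit vector `w` antipodal neither to `u`
nor to the limiting direction `v` of a second Gromov sequence, and the straight ray in direction
`w` links the two. On the other hand straight rays in different directions diverge linearly, so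
the ideal boundary is at least as large as the unit sphere, which already contains a copy of `ℝ`.
-/

open Topology
open scoped RealInnerProductSpace

section MetricSpace

variable {α : Type*} [MetricSpace α]

lemma rayEquiv_equivalence : Equivalence (RayEquiv (α := α)) where
  refl _ := ⟨0, fun _ _ => (dist_self _).le⟩
  symm := fun ⟨C, hC⟩ => ⟨C, fun t ht => (dist_comm _ _).trans_le (hC t ht)⟩
  trans := fun ⟨C, hC⟩ ⟨D, hD⟩ =>
    ⟨C + D, fun t ht => (dist_triangle _ _ _).trans (add_le_add (hC t ht) (hD t ht))⟩

variable {o : α} {x : ℕ → α}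

lemma IsGromovSeq.tendsto_dist (hx : IsGromovSeq o x) :
    Tendsto (fun m => dist (x m) o) atTop atTop :=
  (hx.comp tendsto_atTop_diagonal).congr fun m => by simp [gromovProd]

lemma IsGromovSeq.gromovRel_comp (hx : IsGromovSeq o x) {φ ψ : ℕ → ℕ}
    (hφ : Tendsto φ atTop atTop) (hψ : Tendsto ψ atTop atTop) :
    GromovRel o (x ∘ φ) (x ∘ ψ) :=
  hx.comp (hφ.prod_atTop hψ)

end MetricSpace

lemma IsGromovSeq.tendsto_norm {E : Type*} [NormedAddCommGroup E] {x : ℕ → E}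
    (hx : IsGromovSeq 0 x) : Tendsto (fun m => ‖x m‖) atTop atTop := by
  simpa only [dist_zero_right] using hx.tendsto_dist

section NormedSpace

variable {E : Type*} [NormedAddCommGroup E] [NormedSpace ℝ E]

lemma isGeodesicRay_smul {u : E} (hu : ‖u‖ = 1) : IsGeodesicRay (fun t : ℝ => t • u) :=
  fun s t _ _ => by rw [dist_eq_norm, ← sub_smul, norm_smul, Real.norm_eq_abs, hu, mul_one]

lemma not_rayEquiv_smul {u v : E} (h : u ≠ v) :
    ¬RayEquiv (fun t : ℝ => t • u) (fun t : ℝ => t • v) := by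
  rintro ⟨C, hC⟩
  have hd : 0 < ‖u - v‖ := norm_pos_iff.2 (sub_ne_zero.2 h)
  have ht : 0 ≤ (|C| + 1) / ‖u - v‖ := by positivity
  have := hC _ ht
  rw [dist_eq_norm, ← smul_sub, norm_smul, Real.norm_eq_abs, abs_of_nonneg ht,
    div_mul_cancel₀ _ hd.ne'] at this
  linarith [le_abs_self C]

lemma tendsto_norm_natCast_smul {w : E} (hw : ‖w‖ = 1) :
    Tendsto (fun k : ℕ => ‖(k : ℝ) • w‖) atTop atTop := by
  simpa [norm_smul, hw] using tendsto_natCast_atTop_atTop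

lemma tendsto_direction_natCast_smul {w : E} (hw : ‖w‖ = 1) :
    Tendsto (fun k : ℕ => ‖(k : ℝ) • w‖⁻¹ • ((k : ℝ) • w)) atTop (𝓝 w) := by
  refine tendsto_const_nhds.congr' ?_
  filter_upwards [eventually_ne_atTop 0] with k hk
  simp [norm_smul, hw, smul_smul, hk]

lemma IsGromovSeq.exists_tendsto_direction [ProperSpace E] {x : ℕ → E}
    (hx : IsGromovSeq 0 x) :
    ∃ u ∈ Metric.sphere (0 : E) 1, ∃ φ : ℕ → ℕ, StrictMono φ ∧
      Tendsto (fun m => ‖(x ∘ φ) m‖⁻¹ • (x ∘ φ) m) atTop (𝓝 u) := by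
  have hsphere : ∀ᶠ m in atTop, ‖x m‖⁻¹ • x m ∈ Metric.sphere (0 : E) 1 := by
    filter_upwards [hx.tendsto_norm.eventually_gt_atTop 0] with m hm
    simp [norm_smul, hm.ne']
  exact (isCompact_sphere (0 : E) 1).tendsto_subseq' hsphere.frequently

end NormedSpace

section InnerProductSpace

variable {E : Type*} [NormedAddCommGroup E] [InnerProductSpace ℝ E]

lemma mul_min_norm_le_gromovProd {a b : E} {c : ℝ} (hc : 0 ≤ c)
    (h : c * (‖a‖ * ‖b‖) ≤ ‖a‖ * ‖b‖ + ⟪a, b⟫) :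
    c * min ‖a‖ ‖b‖ / 4 ≤ gromovProd 0 a b := by
  have hgp : gromovProd 0 a b = (‖a‖ + ‖b‖ - ‖a - b‖) / 2 := by
    simp [gromovProd, dist_eq_norm]
  -- `(‖a‖ + ‖b‖ - ‖a - b‖) (‖a‖ + ‖b‖ + ‖a - b‖) = 2 (‖a‖ ‖b‖ + ⟪a, b⟫)`,
  -- and the second factor is at most `2 (‖a‖ + ‖b‖)`
  have hsq := norm_sub_sq_real a b
  have htri := norm_sub_le a b
  have hmin : min ‖a‖ ‖b‖ * (‖a‖ + ‖b‖) ≤ 2 * (‖a‖ * ‖b‖) := by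
    rcases le_total ‖a‖ ‖b‖ with hle | hle
    · rw [min_eq_left hle]; nlinarith [norm_nonneg a]
    · rw [min_eq_right hle]; nlinarith [norm_nonneg b]
  have hm := le_min (norm_nonneg a) (norm_nonneg b)
  rw [hgp]
  rcases (add_nonneg (norm_nonneg a) (norm_nonneg b)).eq_or_lt with hs | hs
  · have : min ‖a‖ ‖b‖ ≤ 0 := (min_le_left _ _).trans (by linarith [norm_nonneg a, norm_nonneg b])
    nlinarith
  · nlinarith [mul_le_mul_of_nonneg_left hmin hc, norm_nonneg (a - b)]

lemma gromovRel_of_tendsto_direction {x y : ℕ → E} {u v : E}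
    (hx : Tendsto (fun m => ‖x m‖) atTop atTop) (hy : Tendsto (fun m => ‖y m‖) atTop atTop)
    (hu : Tendsto (fun m => ‖x m‖⁻¹ • x m) atTop (𝓝 u))
    (hv : Tendsto (fun m => ‖y m‖⁻¹ • y m) atTop (𝓝 v)) (huv : -1 < ⟪u, v⟫) :
    GromovRel 0 x y := by
  obtain ⟨c, hc, hc1⟩ : ∃ c : ℝ, 0 < c ∧ c - 1 < ⟪u, v⟫ :=
    ⟨(1 + ⟪u, v⟫) / 2, by linarith, by linarith⟩
  have hangle : Tendsto (fun p : ℕ × ℕ => ⟪‖x p.1‖⁻¹ • x p.1, ‖y p.2‖⁻¹ • y p.2⟫) atTop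
      (𝓝 ⟪u, v⟫) := by
    rw [← prod_atTop_atTop_eq]
    exact (hu.comp tendsto_fst).inner (hv.comp tendsto_snd)
  have hmin : Tendsto (fun p : ℕ × ℕ => min ‖x p.1‖ ‖y p.2‖) atTop atTop := by
    rw [← prod_atTop_atTop_eq]
    exact tendsto_inf_atTop _ (hx.comp tendsto_fst) (hy.comp tendsto_snd)
  refine tendsto_atTop_mono' _ ?_ ((hmin.const_mul_atTop hc).atTop_div_const four_pos)
  filter_upwards [hangle.eventually (eventually_gt_nhds hc1),
    hmin.eventually_gt_atTop 0] with p hp hpos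
  obtain ⟨hx0, hy0⟩ := lt_min_iff.1 hpos
  refine mul_min_norm_le_gromovProd hc.le ?_
  rw [real_inner_smul_left, real_inner_smul_right, ← mul_assoc, ← mul_inv,
    lt_inv_mul_iff₀ (mul_pos hx0 hy0)] at hp
  linarith

lemma neg_one_lt_real_inner_of_ne_neg {u w : E} (hu : ‖u‖ = 1) (hw : ‖w‖ = 1) (h : u ≠ -w) :
    -1 < ⟪u, w⟫ :=
  (neg_one_le_real_inner_of_norm_eq_one hu hw).lt_of_ne fun he =>
    h ((inner_eq_neg_one_iff_of_norm_eq_one hu hw).1 he.symm)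

theorem transGen_gromovRel_of_isGromovSeq [ProperSpace E]
    (hS : (Metric.sphere (0 : E) 1).Infinite) {x y : ℕ → E}
    (hx : IsGromovSeq 0 x) (hy : IsGromovSeq 0 y) : Relation.TransGen (GromovRel 0) x y := by
  obtain ⟨u, hu, φ, hφ, hxu⟩ := hx.exists_tendsto_direction
  obtain ⟨v, hv, ψ, hψ, hyv⟩ := hy.exists_tendsto_direction
  obtain ⟨w, hw, hwuv⟩ := hS.exists_notMem_finite (Set.toFinite {-u, -v})
  rw [mem_sphere_zero_iff_norm] at hu hv hw
  simp only [Set.mem_insert_iff, Set.mem_singleton_iff, not_or] at hwuv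
  have hxw : GromovRel 0 (x ∘ φ) (fun k : ℕ => (k : ℝ) • w) :=
    gromovRel_of_tendsto_direction (hx.tendsto_norm.comp hφ.tendsto_atTop)
      (tendsto_norm_natCast_smul hw) hxu (tendsto_direction_natCast_smul hw)
      (neg_one_lt_real_inner_of_ne_neg hu hw fun h => hwuv.1 (by rw [h, neg_neg]))
  have hwy : GromovRel 0 (fun k : ℕ => (k : ℝ) • w) (y ∘ ψ) :=
    gromovRel_of_tendsto_direction (tendsto_norm_natCast_smul hw)
      (hy.tendsto_norm.comp hψ.tendsto_atTop) (tendsto_direction_natCast_smul hw)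
      hyv (neg_one_lt_real_inner_of_ne_neg hw hv hwuv.2)
  exact .tail (.tail (.tail (.single (hx.gromovRel_comp tendsto_id hφ.tendsto_atTop)) hxw) hwy)
    (hy.gromovRel_comp hψ.tendsto_atTop tendsto_id)

section OrthonormalPair

variable {a b : E} (ha : ‖a‖ = 1) (hb : ‖b‖ = 1) (hab : ⟪a, b⟫ = 0)
include ha hb hab

lemma exists_injective_norm_eq_one : ∃ f : ℝ → E, Function.Injective f ∧ ∀ t, ‖f t‖ = 1 := by
  have hA : ∀ t : ℝ, ⟪a + t • b, a⟫ = 1 := fun t => by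
    rw [inner_add_left, real_inner_smul_left, real_inner_self_eq_norm_sq, ha, real_inner_comm a b,
      hab]
    ring
  have hB : ∀ t : ℝ, ⟪a + t • b, b⟫ = t := fun t => by
    rw [inner_add_left, real_inner_smul_left, real_inner_self_eq_norm_sq, hb, hab]
    ring
  have hne : ∀ t : ℝ, a + t • b ≠ 0 := fun t h => by simpa [h] using hA t
  refine ⟨fun t => ‖a + t • b‖⁻¹ • (a + t • b), ?_, fun t => by
    simpa using norm_smul_inv_norm (𝕜 := ℝ) (hne t)⟩
  refine Function.LeftInverse.injective (g := fun w => ⟪w, b⟫ / ⟪w, a⟫) fun t => ?_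
  simp only [real_inner_smul_left, hA, hB]
  field_simp [norm_ne_zero_iff.2 (hne t)]

lemma sphere_infinite_of_orthonormal : (Metric.sphere (0 : E) 1).Infinite :=
  let ⟨_, hf, hf1⟩ := exists_injective_norm_eq_one ha hb hab
  Set.infinite_of_injective_forall_mem hf fun t => mem_sphere_zero_iff_norm.2 (hf1 t)

theorem continuum_le_mk_quot_rayEquiv :
    Cardinal.continuum ≤ Cardinal.mk
      (Quot (fun γ₁ γ₂ : {γ : ℝ → E // IsGeodesicRay γ} => RayEquiv γ₁.1 γ₂.1)) := by
  obtain ⟨f, hf, hf1⟩ := exists_injective_norm_eq_one ha hb hab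
  have hF : Function.Injective fun t =>
      Quot.mk (fun γ₁ γ₂ : {γ : ℝ → E // IsGeodesicRay γ} => RayEquiv γ₁.1 γ₂.1)
        ⟨fun s => s • f t, isGeodesicRay_smul (hf1 t)⟩ := by
    intro t t' h
    by_contra hne
    exact not_rayEquiv_smul (hf.ne hne)
      ((rayEquiv_equivalence.comap Subtype.val).eqvGen_iff.1 (Quot.eqvGen_exact h))
  simpa [Cardinal.mk_real] using Cardinal.lift_mk_le_lift_mk_of_injective hF

end OrthonormalPair

end InnerProductSpace

/-- In Euclidean space `ℝⁿ`, `n ≥ 2`: the Gromov boundary is a singleton, the ideal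
boundary (equivalence classes of geodesic rays) has cardinality at least the continuum,
and hence the natural map `ν` from the ideal boundary to the Gromov boundary is not
injective: there are inequivalent rays whose associated Gromov sequences are
equivalent. -/
theorem stmt_6 (n : ℕ) (hn : 2 ≤ n) :
    (∀ x y : ℕ → EuclideanSpace ℝ (Fin n),
      IsGromovSeq 0 x → IsGromovSeq 0 y → Relation.TransGen (GromovRel 0) x y) ∧
    Cardinal.continuum ≤
      Cardinal.mk (Quot (fun γ₁ γ₂ : {γ : ℝ → EuclideanSpace ℝ (Fin n) // IsGeodesicRay γ} =>
        RayEquiv γ₁.1 γ₂.1)) ∧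
    ∃ γ₁ γ₂ : ℝ → EuclideanSpace ℝ (Fin n),
      IsGeodesicRay γ₁ ∧ IsGeodesicRay γ₂ ∧ ¬RayEquiv γ₁ γ₂ ∧
      Relation.TransGen (GromovRel 0) (fun k : ℕ => γ₁ k) (fun k : ℕ => γ₂ k) := by
  have hON := EuclideanSpace.orthonormal_single (𝕜 := ℝ) (ι := Fin n)
  obtain ⟨a, b, ha, hb, hab⟩ : ∃ a b : EuclideanSpace ℝ (Fin n), ‖a‖ = 1 ∧ ‖b‖ = 1 ∧ ⟪a, b⟫ = 0 :=
    ⟨_, _, hON.1 ⟨0, by omega⟩, hON.1 ⟨1, by omega⟩, hON.2 (by simp [Fin.ext_iff])⟩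
  have hne : a ≠ b := fun h => by simp [h, hb] at hab
  refine ⟨fun x y hx hy =>
      transGen_gromovRel_of_isGromovSeq (sphere_infinite_of_orthonormal ha hb hab) hx hy,
    continuum_le_mk_quot_rayEquiv ha hb hab, fun t => t • a, fun t => t • b,
    isGeodesicRay_smul ha, isGeodesicRay_smul hb, not_rayEquiv_smul hne, .single ?_⟩
  exact gromovRel_of_tendsto_direction (tendsto_norm_natCast_smul ha)
    (tendsto_norm_natCast_smul hb) (tendsto_direction_natCast_smul ha)
    (tendsto_direction_natCast_smul hb) (by simp [hab])
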